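/- arXiv:1705.04572 — 3 statements merged into one kernel-verified Lean document; each statement's English description precedes it below -/
import Mathlib

section
/- Let (A₁,Q₁) and (A₂,Q₂) be finite quadratic modules and let (A,Q) be their orthogonal direct sum, i.e. A = A₁ × A₂ and Q(x₁,x₂) = Q₁(x₁) + Q₂(x₂) (which is again a finite quadratic module). Then the linear isomorphism Φ : ℂ[A] → ℂ[A₁] ⊗ ℂ[A₂] determined by Φ(𝔢_{(x₁,x₂)}) = 𝔢_{x₁} ⊗ 𝔢_{x₂} intertwines the Weil representation operators: Φ ∘ T_A = (T_{A₁} ⊗ T_{A₂}) ∘ Φ and Φ ∘ S_A = (S_{A₁} ⊗ S_{A₂}) ∘ Φ, where the subscripts indicate the operators attached to the respective finite quadratic module. -/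
open Finset

noncomputable def qe (q : AddCircle (1 : ℚ)) : ℂ :=
  Complex.exp (2 * (Real.pi : ℂ) * Complex.I * ((q.out : ℚ) : ℂ))

/-- `(A, Q)` is a finite quadratic module: `Q` is a nondegenerate quadratic form
with values in `ℚ/ℤ`. -/
def IsFQM {A : Type*} [AddCommGroup A] (Q : A → AddCircle (1 : ℚ)) : Prop :=
  (∀ (n : ℤ) (x : A), Q (n • x) = n ^ 2 • Q x) ∧
  (∀ x x' y : A,
      Q (x + x' + y) - Q (x + x') - Q y =
        (Q (x + y) - Q x - Q y) + (Q (x' + y) - Q x' - Q y)) ∧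
  (∀ x : A, (∀ y : A, Q (x + y) - Q x - Q y = 0) → x = 0)

/-- The standard basis vector `𝔢_x` of `ℂ[A]`. -/
noncomputable def indic {A : Type*} [DecidableEq A] (x : A) : A → ℂ :=
  fun y => if y = x then 1 else 0

/-- The Weil representation operator `T`. -/
noncomputable def weilT {A : Type*} [AddCommGroup A] [Fintype A]
    (Q : A → AddCircle (1 : ℚ)) : (A → ℂ) →ₗ[ℂ] (A → ℂ) where
  toFun v := fun x => qe (Q x) * v x
  map_add' u v := by funext x; simp [mul_add]
  map_smul' c v := by funext x; simp [smul_eq_mul]; ring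

/-- The Weil representation operator `S`. -/
noncomputable def weilS {A : Type*} [AddCommGroup A] [Fintype A]
    (Q : A → AddCircle (1 : ℚ)) : (A → ℂ) →ₗ[ℂ] (A → ℂ) where
  toFun v := fun y =>
    ((Fintype.card A : ℂ)⁻¹ * ∑ z, qe (-(Q z))) *
      ∑ x, qe (-(Q (x + y) - Q x - Q y)) * v x
  map_add' u v := by
    funext y
    simp only [Pi.add_apply, mul_add, Finset.sum_add_distrib]
  map_smul' c v := by
    funext y
    simp only [Pi.smul_apply, smul_eq_mul, RingHom.id_apply, Finset.mul_sum]
    exact Finset.sum_congr rfl fun x _ => by ring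

/-- The space of invariants of the Weil representation. -/
noncomputable def weilInv {A : Type*} [AddCommGroup A] [Fintype A]
    (Q : A → AddCircle (1 : ℚ)) : Submodule ℂ (A → ℂ) where
  carrier := {v | weilS Q v = v ∧ weilT Q v = v}
  add_mem' := by
    rintro u v ⟨hu1, hu2⟩ ⟨hv1, hv2⟩
    exact ⟨by rw [map_add, hu1, hv1], by rw [map_add, hu2, hv2]⟩
  zero_mem' := ⟨map_zero _, map_zero _⟩
  smul_mem' := by
    rintro c v ⟨h1, h2⟩
    exact ⟨by rw [map_smul, h1], by rw [map_smul, h2]⟩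

/-- `N` is the level of `(A,Q)`. -/
def IsLvl {A : Type*} [AddCommGroup A] (Q : A → AddCircle (1 : ℚ)) (N : ℕ) : Prop :=
  0 < N ∧ (∀ x, N • Q x = 0) ∧ ∀ M : ℕ, 0 < M → (∀ x, M • Q x = 0) → N ≤ M

/-!
In the indicator bases, `T` and `S` of the orthogonal sum have matrices that are Kronecker products
of those of the summands: `e` turns the sums `Q = Q₁ + Q₂` and `B = B₁ + B₂` into products, and the
normalising Gauss sum of `A₁ × A₂` factors as the product of those of `A₁` and `A₂`. Under `Φ`, a
Kronecker product of matrices is the tensor product of the operators.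
-/

open TensorProduct

lemma qe_add (a b : AddCircle (1 : ℚ)) : qe (a + b) = qe a * qe b := by
  obtain ⟨k, hk⟩ : ∃ k : ℤ, a.out + b.out = (a + b).out + k := by
    have h : ((a.out + b.out - (a + b).out : ℚ) : AddCircle (1 : ℚ)) = 0 := by simp
    obtain ⟨k, hk⟩ := (AddCircle.coe_eq_zero_iff 1).mp h
    exact ⟨k, by simp at hk; linarith⟩
  have hkC : ((a.out : ℚ) : ℂ) + ((b.out : ℚ) : ℂ) = (((a + b).out : ℚ) : ℂ) + k := by
    exact_mod_cast hk
  rw [qe, qe, qe, ← Complex.exp_add, ← mul_add, hkC, mul_add, Complex.exp_add,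
    show 2 * (Real.pi : ℂ) * Complex.I * k = k * (2 * Real.pi * Complex.I) by ring,
    Complex.exp_int_mul_two_pi_mul_I, mul_one]

section Indicators

variable {A : Type*} [DecidableEq A]

lemma indic_eq_basisFun [Finite A] (x : A) : indic x = Pi.basisFun ℂ A x := by
  ext y
  simp [indic, Pi.single_apply]

lemma sum_smul_indic [Fintype A] (f : A → ℂ) : ∑ y, f y • indic y = f := by
  ext y
  simp [indic, Finset.sum_apply]

lemma indic_prod_apply {B : Type*} [DecidableEq B] (x y : A × B) :
    indic x y = indic x.1 y.1 * indic x.2 y.2 := by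
  simp only [indic, Prod.ext_iff, ite_and, mul_ite, ite_mul, one_mul, mul_one, zero_mul]
  split_ifs <;> rfl

end Indicators

section KernelTensor

variable {A₁ A₂ : Type*} [Fintype A₁] [DecidableEq A₁] [Fintype A₂] [DecidableEq A₂]

lemma tmul_eq_sum_indic_tmul (f : A₁ → ℂ) (g : A₂ → ℂ) :
    f ⊗ₜ[ℂ] g = ∑ y₁, ∑ y₂, (f y₁ * g y₂) • (indic y₁ ⊗ₜ[ℂ] indic y₂) := by
  conv_lhs => rw [← sum_smul_indic f, ← sum_smul_indic g]
  simp only [sum_tmul, tmul_sum, smul_tmul_smul]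
  exact sum_comm

lemma comp_eq_map_comp_of_apply_indic
    (Φ : (A₁ × A₂ → ℂ) →ₗ[ℂ] (A₁ → ℂ) ⊗[ℂ] (A₂ → ℂ))
    (hΦ : ∀ (x₁ : A₁) (x₂ : A₂), Φ (indic (x₁, x₂)) = indic x₁ ⊗ₜ[ℂ] indic x₂)
    (L : (A₁ × A₂ → ℂ) →ₗ[ℂ] (A₁ × A₂ → ℂ)) (L₁ : (A₁ → ℂ) →ₗ[ℂ] (A₁ → ℂ))
    (L₂ : (A₂ → ℂ) →ₗ[ℂ] (A₂ → ℂ))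
    (hL : ∀ x y, L (indic x) y = L₁ (indic x.1) y.1 * L₂ (indic x.2) y.2) :
    Φ ∘ₗ L = map L₁ L₂ ∘ₗ Φ := by
  refine (Pi.basisFun ℂ (A₁ × A₂)).ext fun x => ?_
  rw [← indic_eq_basisFun, LinearMap.comp_apply, LinearMap.comp_apply, hΦ, map_tmul,
    tmul_eq_sum_indic_tmul, ← sum_smul_indic (L (indic x)), map_sum, Fintype.sum_prod_type]
  simp only [map_smul, hΦ, hL]

end KernelTensor

section WeilOperators

variable {A : Type*} [AddCommGroup A] [Fintype A] [DecidableEq A] (Q : A → AddCircle (1 : ℚ))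

lemma weilT_apply_indic (x y : A) : weilT Q (indic x) y = qe (Q y) * indic x y := rfl

lemma weilS_apply_indic (x y : A) :
    weilS Q (indic x) y =
      ((Fintype.card A : ℂ)⁻¹ * ∑ z, qe (-(Q z))) * qe (-(Q (x + y) - Q x - Q y)) := by
  simp [weilS, indic]

end WeilOperators

section OrthogonalSum

variable {A₁ A₂ : Type*} {Q₁ : A₁ → AddCircle (1 : ℚ)} {Q₂ : A₂ → AddCircle (1 : ℚ)}
  {Q : A₁ × A₂ → AddCircle (1 : ℚ)}

lemma weilS_const_of_orthogonal [Fintype A₁] [Fintype A₂]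
    (hQ : ∀ x : A₁ × A₂, Q x = Q₁ x.1 + Q₂ x.2) :
    (Fintype.card (A₁ × A₂) : ℂ)⁻¹ * ∑ z, qe (-(Q z)) =
      ((Fintype.card A₁ : ℂ)⁻¹ * ∑ z, qe (-(Q₁ z))) *
        ((Fintype.card A₂ : ℂ)⁻¹ * ∑ z, qe (-(Q₂ z))) := by
  have hsum : ∑ z, qe (-(Q z)) = (∑ z, qe (-(Q₁ z))) * ∑ z, qe (-(Q₂ z)) := by
    simp only [hQ, neg_add, qe_add, Fintype.sum_prod_type, sum_mul_sum]
  rw [hsum, Fintype.card_prod, Nat.cast_mul, mul_inv]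
  ring

lemma qe_polar_of_orthogonal [AddCommGroup A₁] [AddCommGroup A₂]
    (hQ : ∀ x : A₁ × A₂, Q x = Q₁ x.1 + Q₂ x.2) (x y : A₁ × A₂) :
    qe (-(Q (x + y) - Q x - Q y)) =
      qe (-(Q₁ (x.1 + y.1) - Q₁ x.1 - Q₁ y.1)) * qe (-(Q₂ (x.2 + y.2) - Q₂ x.2 - Q₂ y.2)) := by
  rw [← qe_add, hQ, hQ, hQ, Prod.fst_add, Prod.snd_add]
  congr 1
  abel

end OrthogonalSum

open TensorProduct in
theorem stmt0_general {A₁ A₂ : Type*} [AddCommGroup A₁] [Fintype A₁] [DecidableEq A₁]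
    [AddCommGroup A₂] [Fintype A₂] [DecidableEq A₂]
    (Q₁ : A₁ → AddCircle (1 : ℚ)) (Q₂ : A₂ → AddCircle (1 : ℚ))
    (Q : A₁ × A₂ → AddCircle (1 : ℚ))
    (hQ : ∀ x : A₁ × A₂, Q x = Q₁ x.1 + Q₂ x.2)
    (Φ : (A₁ × A₂ → ℂ) →ₗ[ℂ] TensorProduct ℂ (A₁ → ℂ) (A₂ → ℂ))
    (hΦ : ∀ (x₁ : A₁) (x₂ : A₂), Φ (indic (x₁, x₂)) = indic x₁ ⊗ₜ[ℂ] indic x₂) :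
    Φ ∘ₗ weilT Q = TensorProduct.map (weilT Q₁) (weilT Q₂) ∘ₗ Φ ∧
    Φ ∘ₗ weilS Q = TensorProduct.map (weilS Q₁) (weilS Q₂) ∘ₗ Φ := by
  constructor
  · refine comp_eq_map_comp_of_apply_indic Φ hΦ _ _ _ fun x y => ?_
    rw [weilT_apply_indic, weilT_apply_indic, weilT_apply_indic, indic_prod_apply, hQ, qe_add]
    ring
  · refine comp_eq_map_comp_of_apply_indic Φ hΦ _ _ _ fun x y => ?_
    rw [weilS_apply_indic, weilS_apply_indic, weilS_apply_indic,
      weilS_const_of_orthogonal hQ, qe_polar_of_orthogonal hQ]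
    ring

open TensorProduct in
/-- The isomorphism `ℂ[A₁ × A₂] ≅ ℂ[A₁] ⊗ ℂ[A₂]` sending `𝔢_{(x₁,x₂)}` to
`𝔢_{x₁} ⊗ 𝔢_{x₂}` intertwines the Weil representation operators of the orthogonal
direct sum `(A₁ × A₂, Q₁ ⊕ Q₂)` with the tensor products of those of the factors. -/
theorem stmt0 {A₁ A₂ : Type*} [AddCommGroup A₁] [Fintype A₁] [DecidableEq A₁]
    [AddCommGroup A₂] [Fintype A₂] [DecidableEq A₂]
    (Q₁ : A₁ → AddCircle (1 : ℚ)) (Q₂ : A₂ → AddCircle (1 : ℚ))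
    (hQ₁ : IsFQM Q₁) (hQ₂ : IsFQM Q₂)
    (Q : A₁ × A₂ → AddCircle (1 : ℚ))
    (hQ : ∀ x : A₁ × A₂, Q x = Q₁ x.1 + Q₂ x.2)
    (Φ : (A₁ × A₂ → ℂ) →ₗ[ℂ] TensorProduct ℂ (A₁ → ℂ) (A₂ → ℂ))
    (hΦ : ∀ (x₁ : A₁) (x₂ : A₂), Φ (indic (x₁, x₂)) = indic x₁ ⊗ₜ[ℂ] indic x₂) :
    Φ ∘ₗ weilT Q = TensorProduct.map (weilT Q₁) (weilT Q₂) ∘ₗ Φ ∧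
    Φ ∘ₗ weilS Q = TensorProduct.map (weilS Q₁) (weilS Q₂) ∘ₗ Φ :=
  stmt0_general Q₁ Q₂ Q hQ Φ hΦ
end

section
/- Let (A,Q) be a finite quadratic module with even signature, and set ε = (∑_{z∈A} e(−Q(z)))²/|A|, so ε ∈ {1, −1}. Then every v ∈ ℂ[A] with Sv = v satisfies v(−a) = ε·v(a) for all a ∈ A. In particular, every invariant lies in the ε-eigenspace ℂ[A]^ε of the involution v ↦ v(−·), and the (−ε)-eigenspace contains no nonzero invariants of the Weil representation. -/
/-!
Nondegeneracy of `B` makes `x ↦ e(-B(x, c))` a nontrivial character of `A` for `c ≠ 0`, so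
character orthogonality collapses the double sum in `S²` and gives `S² v = ε · v(-·)`. Hence
`S v = v` forces `v(-a) = ε v(a)`; even signature means `ε² = 1`, and a vector lying in both
the `ε`- and the `(-ε)`-eigenspace of `v ↦ v(-·)` vanishes.
-/

open Finset

open QuadraticMap (polar polar_comm)

lemma qe_coe (r : ℚ) : qe r = Complex.exp (2 * Real.pi * Complex.I * r) := by
  obtain ⟨n, hn⟩ : ∃ n : ℤ, n • (1 : ℚ) = (r : AddCircle (1 : ℚ)).out - r :=
    (AddCircle.coe_eq_zero_iff 1).mp (by simp)
  rw [qe, Complex.exp_eq_exp_iff_exists_int]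
  refine ⟨n, ?_⟩
  rw [eq_sub_iff_add_eq', zsmul_one] at hn
  rw [← hn]
  push_cast
  ring

lemma qe_eq_one_iff {q : AddCircle (1 : ℚ)} : qe q = 1 ↔ q = 0 := by
  induction q using QuotientAddGroup.induction_on with | H r => ?_
  rw [qe_coe, Complex.exp_eq_one_iff, AddCircle.coe_eq_zero_iff 1]
  refine exists_congr fun n => ?_
  rw [zsmul_one, mul_comm, mul_left_inj' (by simp [Real.pi_ne_zero])]
  exact_mod_cast eq_comm

noncomputable def qeChar : AddChar (AddCircle (1 : ℚ)) ℂ where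
  toFun := qe
  map_zero_eq_one' := qe_eq_one_iff.mpr rfl
  map_add_eq_mul' a b := by
    induction a using QuotientAddGroup.induction_on with | H r => ?_
    induction b using QuotientAddGroup.induction_on with | H s => ?_
    rw [← AddCircle.coe_add 1, qe_coe, qe_coe, qe_coe, ← Complex.exp_add]
    push_cast
    ring_nf

@[simp]
lemma qeChar_apply (q : AddCircle (1 : ℚ)) : qeChar q = qe q := rfl

namespace IsFQM

variable {A : Type*} [AddCommGroup A] {Q : A → AddCircle (1 : ℚ)}

lemma polar_add_left (hQ : IsFQM Q) (x x' y : A) :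
    polar Q (x + x') y = polar Q x y + polar Q x' y :=
  hQ.2.1 x x' y

lemma polar_zero_left (hQ : IsFQM Q) (y : A) : polar Q 0 y = 0 := by
  simpa using hQ.polar_add_left 0 0 y

lemma polar_add_right (hQ : IsFQM Q) (x y y' : A) :
    polar Q x (y + y') = polar Q x y + polar Q x y' := by
  simp only [polar_comm Q x, hQ.polar_add_left]

noncomputable def pairingChar (hQ : IsFQM Q) (c : A) : AddChar A ℂ :=
  qeChar.compAddMonoidHom
    (AddMonoidHom.mk' (fun x => -polar Q x c) fun x x' => by
      rw [hQ.polar_add_left, neg_add])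

lemma pairingChar_apply (hQ : IsFQM Q) (c x : A) :
    hQ.pairingChar c x = qe (-polar Q x c) := rfl

lemma pairingChar_eq_zero_iff (hQ : IsFQM Q) {c : A} : hQ.pairingChar c = 0 ↔ c = 0 := by
  simp only [AddChar.ext_iff, AddChar.zero_apply, pairingChar_apply, qe_eq_one_iff,
    neg_eq_zero]
  refine ⟨fun h => hQ.2.2 c fun y => ?_, ?_⟩
  · rw [← h y, polar_comm]
    rfl
  · rintro rfl x
    rw [polar_comm, hQ.polar_zero_left]

lemma sum_qe_neg_polar [Fintype A] [DecidableEq A] (hQ : IsFQM Q) (c : A) :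
    ∑ x, qe (-polar Q x c) = if c = 0 then (Fintype.card A : ℂ) else 0 := by
  classical
  exact (hQ.pairingChar c).sum_eq_ite.trans (if_congr hQ.pairingChar_eq_zero_iff rfl rfl)

end IsFQM

section Weil

variable {A : Type*} [AddCommGroup A] [Fintype A] {Q : A → AddCircle (1 : ℚ)}

lemma IsFQM.weilS_weilS_apply (hQ : IsFQM Q) (v : A → ℂ) (y : A) :
    weilS Q (weilS Q v) y =
      (∑ z, qe (-(Q z))) ^ 2 / (Fintype.card A : ℂ) * v (-y) := by
  classical
  set γ := (Fintype.card A : ℂ)⁻¹ * ∑ z, qe (-(Q z)) with hγ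
  have hmul (x u : A) : qe (-polar Q x y) * qe (-polar Q u x) = qe (-polar Q x (y + u)) := by
    rw [← qeChar_apply, ← qeChar_apply, ← AddChar.map_add_eq_mul, polar_comm Q u,
      hQ.polar_add_right, neg_add, qeChar_apply]
  calc weilS Q (weilS Q v) y
      = γ * ∑ x, qe (-polar Q x y) * (γ * ∑ u, qe (-polar Q u x) * v u) := rfl
    _ = γ * γ * ∑ u, (∑ x, qe (-polar Q x (y + u))) * v u := by
        simp only [mul_sum, sum_mul, ← hmul]
        rw [sum_comm]
        refine sum_congr rfl fun u _ => sum_congr rfl fun x _ => ?_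
        ring
    _ = γ * γ * ((Fintype.card A : ℂ) * v (-y)) := by
        simp only [hQ.sum_qe_neg_polar, add_eq_zero_iff_eq_neg', ite_mul, zero_mul,
          sum_ite_eq', mem_univ, if_true]
    _ = (∑ z, qe (-(Q z))) ^ 2 / (Fintype.card A : ℂ) * v (-y) := by
        have hA : (Fintype.card A : ℂ) ≠ 0 := Nat.cast_ne_zero.mpr Fintype.card_ne_zero
        rw [hγ]
        field_simp

end Weil

/-- In the even signature case, with `ε = (∑ e(-Q(z)))²/|A| ∈ {1,-1}`, every vector
fixed by `S` satisfies `v(-a) = ε·v(a)`; in particular all invariants lie in `ℂ[A]^ε`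
and the `(-ε)`-eigenspace of `v ↦ v(-·)` contains no nonzero invariants. -/
theorem stmt7 {A : Type*} [AddCommGroup A] [Fintype A]
    (Q : A → AddCircle (1 : ℚ)) (hQ : IsFQM Q)
    (heven : (∑ z, qe (-(Q z))) ^ 4 = (Fintype.card A : ℂ) ^ 2)
    (ε : ℂ) (hε : ε = (∑ z, qe (-(Q z))) ^ 2 / (Fintype.card A : ℂ)) :
    (ε = 1 ∨ ε = -1) ∧
    (∀ v : A → ℂ, weilS Q v = v → ∀ a : A, v (-a) = ε * v a) ∧
    (∀ v ∈ weilInv Q, (∀ a : A, v (-a) = -ε * v a) → v = 0) := by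
  have hA : (Fintype.card A : ℂ) ≠ 0 := Nat.cast_ne_zero.mpr Fintype.card_ne_zero
  have hε_sq : ε ^ 2 = 1 := by
    rw [hε, div_pow, ← pow_mul, heven, div_self (pow_ne_zero 2 hA)]
  have hS_fixed (v : A → ℂ) (hv : weilS Q v = v) (a : A) : v (-a) = ε * v a := by
    have h := hQ.weilS_weilS_apply v (-a)
    rwa [hv, hv, neg_neg, ← hε] at h
  refine ⟨sq_eq_one_iff.mp hε_sq, hS_fixed, fun v hv hodd => funext fun a => ?_⟩
  have hε0 : ε ≠ 0 := by
    rintro rfl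
    norm_num at hε_sq
  have h : 2 * ε * v a = 0 := by linear_combination hodd a - hS_fixed v hv.1 a
  simpa [hε0] using h
end

section
/- Let (A,Q) be a finite quadratic module of level N. Then for every prime p, p divides N if and only if p divides |A|. -/
open Finset

/-!
The level `N` is the additive order of `Q` in the group of functions `A → ℚ/ℤ`.
Nondegeneracy of the polar form `B` turns `N • Q = 0` into `N • x = 0` for every `x`, since
`B (N • x, y) = N • B (x, y) = 0`; so every element order divides the level `N`, and Cauchy's
theorem gives `p ∣ |A| → p ∣ N`. Conversely `Q (|A| • x) = |A|² • Q x` and `|A| • x = 0`, so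
`N ∣ |A|²`.
-/

namespace IsFQM

variable {A : Type*} [AddCommGroup A] {Q : A → AddCircle (1 : ℚ)}

theorem map_nsmul (hQ : IsFQM Q) (n : ℕ) (x : A) : Q (n • x) = (n ^ 2) • Q x := by
  simpa only [natCast_zsmul, ← Nat.cast_pow] using hQ.1 n x

theorem map_zero (hQ : IsFQM Q) : Q 0 = 0 := by
  simpa using hQ.map_nsmul 0 0

theorem polar_nsmul_left (hQ : IsFQM Q) (n : ℕ) (x y : A) :
    Q (n • x + y) - Q (n • x) - Q y = n • (Q (x + y) - Q x - Q y) := by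
  induction n with
  | zero => simp [hQ.map_zero]
  | succ n ih => rw [succ_nsmul, hQ.2.1, ih, succ_nsmul]

theorem addOrderOf_dvd_addOrderOf (hQ : IsFQM Q) (x : A) : addOrderOf x ∣ addOrderOf Q := by
  have hQN (z : A) : addOrderOf Q • Q z = 0 := congrFun (addOrderOf_nsmul_eq_zero Q) z
  refine addOrderOf_dvd_of_nsmul_eq_zero (hQ.2.2 _ fun y => ?_)
  rw [hQ.polar_nsmul_left, smul_sub, smul_sub, hQN, hQN, hQN, sub_zero, sub_zero]

theorem addOrderOf_dvd_card_sq [Fintype A] (hQ : IsFQM Q) :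
    addOrderOf Q ∣ Fintype.card A ^ 2 := by
  refine addOrderOf_dvd_of_nsmul_eq_zero (funext fun x => ?_)
  rw [Pi.smul_apply, ← hQ.map_nsmul, card_nsmul_eq_zero, hQ.map_zero, Pi.zero_apply]

end IsFQM

theorem IsLvl.addOrderOf_eq {A : Type*} [AddCommGroup A] {Q : A → AddCircle (1 : ℚ)} {N : ℕ}
    (hN : IsLvl Q N) : addOrderOf Q = N := by
  rw [addOrderOf_eq_iff hN.1]
  exact ⟨funext hN.2.1, fun m hmN hm hmQ => (hN.2.2 m hm (congrFun hmQ)).not_gt hmN⟩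

/-- A prime divides the level of a finite quadratic module if and only if it divides
the order of the underlying group. -/
theorem stmt14 {A : Type*} [AddCommGroup A] [Fintype A]
    (Q : A → AddCircle (1 : ℚ)) (hQ : IsFQM Q)
    (N : ℕ) (hN : IsLvl Q N) (p : ℕ) (hp : p.Prime) :
    p ∣ N ↔ p ∣ Fintype.card A := by
  rw [← hN.addOrderOf_eq]
  constructor
  · exact fun hpN => hp.dvd_of_dvd_pow (hpN.trans hQ.addOrderOf_dvd_card_sq)
  · intro hpA
    have : Fact p.Prime := ⟨hp⟩
    obtain ⟨x, hx⟩ := exists_prime_addOrderOf_dvd_card p hpA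
    exact hx ▸ hQ.addOrderOf_dvd_addOrderOf x
end
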